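/- Assume: (mediator consistency) for every ω ∈ Ω, if A ω = a' then M ω = M(a') ω; and (conditional randomization of the potential mediator) P(M(a') = m | A = a', W = w) = P(M(a') = m | W = w). Then the observed mediator distribution identifies the potential mediator distribution: P(M = m | A = a', W = w) = P(M(a') = m | W = w). (Mediator proof step of Theorem 1.) -/

import Mathlib

open MeasureTheory ProbabilityTheory
open scoped ENNReal BigOperators

lemma cond_preimage_eq_of_eqOn {Ω α : Type*} [MeasurableSpace Ω] (μ : Measure Ω) {s : Set Ω}
    (hs : MeasurableSet s) {f g : Ω → α} (hfg : Set.EqOn f g s) (u : Set α) :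
    μ[f ⁻¹' u | s] = μ[g ⁻¹' u | s] := by
  rw [cond_apply hs, cond_apply hs, hfg.inter_preimage_eq]

theorem observed_mediator_identifies_potential_mediator
    {Ω : Type*} [MeasurableSpace Ω] (P : Measure Ω)
    {𝕄 𝕎 : Type*}
    [MeasurableSpace 𝕎] [MeasurableSingletonClass 𝕎]
    (A : Ω → Bool) (M : Ω → 𝕄) (W : Ω → 𝕎)
    (hA : Measurable A) (hW : Measurable W)
    (Mpot : Bool → Ω → 𝕄)
    (a' : Bool) (m : 𝕄) (w : 𝕎)
    (consistM : ∀ ω, A ω = a' → M ω = Mpot a' ω)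
    (condRandM :
      (P[|{ω | A ω = a' ∧ W ω = w}]) {ω | Mpot a' ω = m}
        = (P[|{ω | W ω = w}]) {ω | Mpot a' ω = m}) :
    (P[|{ω | A ω = a' ∧ W ω = w}]) {ω | M ω = m}
      = (P[|{ω | W ω = w}]) {ω | Mpot a' ω = m} := by
  have hAW : MeasurableSet {ω | A ω = a' ∧ W ω = w} :=
    (hA (measurableSet_singleton a')).inter (hW (measurableSet_singleton w))
  rw [← condRandM]
  exact cond_preimage_eq_of_eqOn P hAW (fun ω hω ↦ consistM ω hω.1) {m}
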